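/- Let c > 1. There exists γ* > 0 such that for every 0 < γ < γ*, the function z ↦ c·ψ(z + γ) − ψ(z) on (0,∞) attains its infimum, and it is attained precisely at the point z*_{c,γ}; that is, inf_{z>0} [c·ψ(z + γ) − ψ(z)] = c·ψ(z*_{c,γ} + γ) − ψ(z*_{c,γ}). -/

import Mathlib

/-!
On `(0, ∞)` the trigamma function is the Hurwitz series `ψ₁(x) = ∑ₖ (x + k)⁻²`, obtained by
differentiating the Gauss product `log Γ = lim logGammaSeq` twice. By Cauchy–Schwarz,
`(∑ (x + k)⁻³)² ≤ ∑ (x + k)⁻² · ∑ (x + k)⁻⁴`, so the logarithmic derivative of `ψ₁` is strictly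
increasing, i.e. `log ψ₁` is strictly convex. Hence `x ↦ ψ₁(x) / ψ₁(x + γ)` is strictly decreasing
for every `γ > 0`, and the derivative `c ψ₁(x + γ) - ψ₁(x)` of `c ψ(x + γ) - ψ(x)` is negative
before the point `z` where that ratio equals `c` and positive after it: `z` is the unique global
minimiser. Since this holds for every `γ > 0`, any `γ* > 0` will do.
-/

/-- The digamma function `ψ(x) = (d/dx) log Γ(x)`. -/
noncomputable def digamma (x : ℝ) : ℝ := deriv (fun y => Real.log (Real.Gamma y)) x

/-- The trigamma function `ψ₁ = ψ'`. -/
noncomputable def trigamma : ℝ → ℝ := deriv digamma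

open Set Filter Topology Real

noncomputable def hurwitzSum (p : ℕ) (x : ℝ) : ℝ := ∑' k : ℕ, 1 / (x + k) ^ p

lemma summable_one_div_add_nat_pow {p : ℕ} (hp : 2 ≤ p) {x : ℝ} (hx : 0 < x) :
    Summable fun k : ℕ => 1 / (x + k) ^ p := by
  refine ((summable_one_div_nat_add_rpow x p).mpr (by exact_mod_cast hp)).congr fun k => ?_
  rw [abs_of_pos (by positivity), rpow_natCast, add_comm]

lemma hurwitzSum_pos {p : ℕ} (hp : 2 ≤ p) {x : ℝ} (hx : 0 < x) : 0 < hurwitzSum p x :=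
  (summable_one_div_add_nat_pow hp hx).tsum_pos (fun _ => by positivity) 0 (by positivity)

lemma hasDerivAt_one_div_add_pow (p : ℕ) {a x : ℝ} (hx : x + a ≠ 0) :
    HasDerivAt (fun y => 1 / (y + a) ^ p) (-p * (1 / (x + a) ^ (p + 1))) x := by
  have h := (hasDerivAt_zpow (-p : ℤ) (x + a) (.inl hx)).comp_add_const x a
  rw [show (-p : ℤ) - 1 = -((p + 1 : ℕ) : ℤ) by push_cast; ring] at h
  simp only [zpow_neg, zpow_natCast, Int.cast_neg, Int.cast_natCast, one_div] at h ⊢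
  exact h

lemma hasDerivAt_hurwitzSum {p : ℕ} (hp : 2 ≤ p) {x : ℝ} (hx : 0 < x) :
    HasDerivAt (hurwitzSum p) (-p * hurwitzSum (p + 1) x) x := by
  have hmem : x ∈ Ioi (x / 2) := by simp only [mem_Ioi]; linarith
  have hpos : ∀ y ∈ Ioi (x / 2), ∀ k : ℕ, 0 < y + k := fun y (hy : x / 2 < y) k => by
    have : 0 < y := by linarith
    positivity
  have h := hasDerivAt_tsum_of_isPreconnected
    ((summable_one_div_add_nat_pow (p := p + 1) (by omega) (half_pos hx)).mul_left (p : ℝ))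
    isOpen_Ioi isPreconnected_Ioi
    (fun k y hy => hasDerivAt_one_div_add_pow p (hpos y hy k).ne') ?_ hmem
    (summable_one_div_add_nat_pow hp hx) hmem
  · rwa [tsum_mul_left] at h
  intro k y hy
  rw [norm_mul, norm_neg, norm_natCast, norm_of_nonneg (by have := hpos y hy k; positivity)]
  have : x / 2 < y := hy
  gcongr

lemma sq_hurwitzSum_three_le {x : ℝ} (hx : 0 < x) :
    hurwitzSum 3 x ^ 2 ≤ hurwitzSum 2 x * hurwitzSum 4 x := by
  have hpow : ∀ (p : ℕ) (k : ℕ), (1 / (x + k) ^ p) ^ (2 : ℝ) = 1 / (x + k) ^ (2 * p) := by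
    intro p k; rw [rpow_two, div_pow, one_pow, ← pow_mul, mul_comm]
  have holder := inner_le_Lp_mul_Lq_tsum_of_nonneg HolderConjugate.two_two
    (f := fun k : ℕ => 1 / (x + k) ^ 1) (g := fun k : ℕ => 1 / (x + k) ^ 2)
    (fun _ => by positivity) (fun _ => by positivity)
    (by simpa only [hpow] using summable_one_div_add_nat_pow le_rfl hx)
    (by simpa only [hpow] using summable_one_div_add_nat_pow (by norm_num) hx)
  have hmul : ∀ k : ℕ, 1 / (x + k) ^ 1 * (1 / (x + k) ^ 2) = 1 / (x + k) ^ 3 := fun k => by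
    rw [one_div_mul_one_div, ← pow_add]
  simp only [hpow, hmul, ← sqrt_eq_rpow] at holder
  calc hurwitzSum 3 x ^ 2 ≤ (√(hurwitzSum 2 x) * √(hurwitzSum 4 x)) ^ 2 := by
        gcongr
        · exact tsum_nonneg fun _ => by positivity
        · exact holder
    _ = hurwitzSum 2 x * hurwitzSum 4 x := by
        rw [mul_pow, sq_sqrt (hurwitzSum_pos le_rfl hx).le,
          sq_sqrt (hurwitzSum_pos (by norm_num) hx).le]

noncomputable def digammaSeries (x : ℝ) : ℝ :=
  -eulerMascheroniConstant - 1 / x + ∑' k : ℕ, (1 / (k + 1 : ℝ) - 1 / (x + k + 1))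

lemma abs_one_div_sub_one_div_add_le {y : ℝ} (hy : 0 < y) (k : ℕ) :
    |1 / (k + 1 : ℝ) - 1 / (y + k + 1)| ≤ y * (1 / (k + 1 : ℝ) ^ 2) := by
  have hk : (0 : ℝ) < k + 1 := by positivity
  have hyk : (0 : ℝ) < y + k + 1 := by positivity
  have hdiff : 1 / (k + 1 : ℝ) - 1 / (y + k + 1) = y / ((k + 1) * (y + k + 1)) := by
    field_simp; ring
  rw [hdiff, abs_of_nonneg (by positivity), mul_one_div]
  gcongr
  · rw [sq]; gcongr; linarith

lemma summable_one_div_nat_add_one_sq : Summable fun k : ℕ => 1 / (k + 1 : ℝ) ^ 2 := by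
  exact_mod_cast (summable_nat_add_iff 1).mpr
    ((Real.summable_one_div_nat_pow (p := 2)).mpr one_lt_two)

lemma hasDerivAt_logGammaSeq (n : ℕ) {y : ℝ} (hy : 0 < y) :
    HasDerivAt (fun y => BohrMollerup.logGammaSeq y n)
      (log n - ∑ j ∈ Finset.range (n + 1), 1 / (y + j)) y := by
  refine ((hasDerivAt_mul_const (log n)).add_const _).sub (HasDerivAt.fun_sum fun j _ => ?_)
  simpa [one_div] using (hasDerivAt_log (by positivity : y + j ≠ 0)).comp_add_const y (j : ℝ)

lemma log_sub_sum_one_div_add_eq (n : ℕ) (y : ℝ) :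
    log n - ∑ j ∈ Finset.range (n + 1), 1 / (y + j) =
      -(harmonic n - log n) - 1 / y
        + ∑ k ∈ Finset.range n, (1 / (k + 1 : ℝ) - 1 / (y + k + 1)) := by
  simp only [Finset.sum_range_succ', Finset.sum_sub_distrib, harmonic, Rat.cast_sum]
  push_cast
  simp only [add_assoc, add_zero, one_div]
  ring

lemma tendstoUniformlyOn_deriv_logGammaSeq (b : ℝ) :
    TendstoUniformlyOn (fun (n : ℕ) (y : ℝ) => log n - ∑ j ∈ Finset.range (n + 1), 1 / (y + j))
      digammaSeries atTop (Ioo 0 b) := by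
  have hconst : TendstoUniformlyOn (fun (n : ℕ) (y : ℝ) => -(harmonic n - log n) - 1 / y)
      (fun y => -eulerMascheroniConstant - 1 / y) atTop (Ioo 0 b) := by
    rw [Metric.tendstoUniformlyOn_iff]
    intro ε hε
    filter_upwards [Metric.tendsto_nhds.mp tendsto_harmonic_sub_log.neg ε hε] with n hn y _
    rwa [dist_sub_right, dist_comm]
  have hseries := tendstoUniformlyOn_tsum_nat (f := fun k y => 1 / (k + 1 : ℝ) - 1 / (y + k + 1))
    (summable_one_div_nat_add_one_sq.mul_left b) fun k y (hy : y ∈ Ioo 0 b) =>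
      (abs_one_div_sub_one_div_add_le hy.1 k).trans (by gcongr; exact hy.2.le)
  exact (hconst.add hseries).congr (.of_forall fun n y _ => (log_sub_sum_one_div_add_eq n y).symm)

lemma hasDerivAt_log_Gamma {x : ℝ} (hx : 0 < x) :
    HasDerivAt (fun y => log (Gamma y)) (digammaSeries x) x :=
  hasDerivAt_of_tendstoUniformlyOn isOpen_Ioo (tendstoUniformlyOn_deriv_logGammaSeq (x + 1))
    (.of_forall fun n y hy => hasDerivAt_logGammaSeq n hy.1)
    (fun y hy => BohrMollerup.tendsto_log_gamma hy.1)
    (show x ∈ Ioo 0 (x + 1) from ⟨hx, by linarith⟩)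

lemma hurwitzSum_eq_one_div_pow_add_tsum {p : ℕ} (hp : 2 ≤ p) {x : ℝ} (hx : 0 < x) :
    hurwitzSum p x = 1 / x ^ p + ∑' k : ℕ, 1 / (x + k + 1) ^ p := by
  rw [hurwitzSum, (summable_one_div_add_nat_pow hp hx).tsum_eq_zero_add]
  simp [add_assoc]

lemma hasDerivAt_tsum_one_div_sub_one_div_add {x : ℝ} (hx : 0 < x) :
    HasDerivAt (fun y => ∑' k : ℕ, (1 / (k + 1 : ℝ) - 1 / (y + k + 1)))
      (∑' k : ℕ, 1 / (x + k + 1) ^ 2) x := by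
  have hmem : x ∈ Ioi (x / 2) := by simp only [mem_Ioi]; linarith
  have hpos : ∀ y ∈ Ioi (x / 2), ∀ k : ℕ, 0 < y + (k + 1) := fun y (hy : x / 2 < y) k => by
    have : 0 < y := by linarith
    positivity
  have hterm (k : ℕ) (y : ℝ) (hy : y ∈ Ioi (x / 2)) :
      HasDerivAt (fun y => 1 / (k + 1 : ℝ) - 1 / (y + k + 1)) (1 / (y + k + 1) ^ 2) y := by
    simpa [add_assoc] using
      (hasDerivAt_one_div_add_pow 1 (hpos y hy k).ne').const_sub (1 / (k + 1 : ℝ))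
  refine hasDerivAt_tsum_of_isPreconnected
    (summable_one_div_add_nat_pow le_rfl (half_pos hx)) isOpen_Ioi isPreconnected_Ioi hterm
    (fun k y hy => ?_) hmem
    (.of_norm_bounded (summable_one_div_nat_add_one_sq.mul_left x)
      (abs_one_div_sub_one_div_add_le hx)) hmem
  rw [norm_of_nonneg (by have := hpos y hy k; positivity)]
  have : x / 2 < y := hy
  gcongr 1 / ?_ ^ 2
  linarith

lemma hasDerivAt_digammaSeries {x : ℝ} (hx : 0 < x) :
    HasDerivAt digammaSeries (hurwitzSum 2 x) x := by
  have hfun : digammaSeries = fun y => (-eulerMascheroniConstant + -y⁻¹)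
      + ∑' k : ℕ, (1 / (k + 1 : ℝ) - 1 / (y + k + 1)) := by
    ext y; rw [digammaSeries, one_div y]; ring
  rw [hfun, hurwitzSum_eq_one_div_pow_add_tsum le_rfl hx, one_div, ← neg_neg (x ^ 2)⁻¹]
  exact ((hasDerivAt_inv hx.ne').neg.const_add _).add (hasDerivAt_tsum_one_div_sub_one_div_add hx)

lemma hasDerivAt_digamma {x : ℝ} (hx : 0 < x) : HasDerivAt digamma (hurwitzSum 2 x) x := by
  refine (hasDerivAt_digammaSeries hx).congr_of_eventuallyEq ?_
  filter_upwards [Ioi_mem_nhds hx] with y hy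
  exact (hasDerivAt_log_Gamma hy).deriv

lemma trigamma_eq_hurwitzSum {x : ℝ} (hx : 0 < x) : trigamma x = hurwitzSum 2 x :=
  (hasDerivAt_digamma hx).deriv

lemma strictAntiOn_sub_comp_add_of_strictMonoOn_deriv {f f' : ℝ → ℝ} {a γ : ℝ} (hγ : 0 < γ)
    (hf : ∀ x ∈ Ioi a, HasDerivAt f (f' x) x) (hf' : StrictMonoOn f' (Ioi a)) :
    StrictAntiOn (fun x => f x - f (x + γ)) (Ioi a) := by
  have hderiv : ∀ x ∈ Ioi a, HasDerivAt (fun x => f x - f (x + γ)) (f' x - f' (x + γ)) x :=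
    fun x (hx : a < x) =>
      (hf x hx).sub ((hf (x + γ) (by simp only [mem_Ioi]; linarith)).comp_add_const x γ)
  refine strictAntiOn_of_deriv_neg (convex_Ioi a)
    (fun x hx => (hderiv x hx).continuousAt.continuousWithinAt) fun x hx => ?_
  rw [interior_Ioi] at hx
  have hxγ : x + γ ∈ Ioi a := by simp only [mem_Ioi] at hx ⊢; linarith
  rw [(hderiv x hx).deriv, sub_neg]
  exact hf' hx hxγ (by linarith)

lemma apply_lt_apply_of_deriv_neg_of_deriv_pos {f f' : ℝ → ℝ} {a z : ℝ} (hz : a < z)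
    (hf : ∀ x ∈ Ioi a, HasDerivAt f (f' x) x) (hneg : ∀ x ∈ Ioo a z, f' x < 0)
    (hpos : ∀ x ∈ Ioi z, 0 < f' x) {x : ℝ} (hx : a < x) (hxz : x ≠ z) : f z < f x := by
  have hcont : ContinuousOn f (Ioi a) :=
    fun y hy => (hf y hy).continuousAt.continuousWithinAt
  rcases hxz.lt_or_gt with hlt | hgt
  · refine strictAntiOn_of_deriv_neg (convex_Icc x z) (hcont.mono fun y hy => hx.trans_le hy.1)
      (fun y hy => ?_) ⟨le_rfl, hlt.le⟩ ⟨hlt.le, le_rfl⟩ hlt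
    rw [interior_Icc] at hy
    rw [(hf y (hx.trans hy.1)).deriv]
    exact hneg y ⟨hx.trans hy.1, hy.2⟩
  · refine strictMonoOn_of_deriv_pos (convex_Icc z x) (hcont.mono fun y hy => hz.trans_le hy.1)
      (fun y hy => ?_) ⟨le_rfl, hgt.le⟩ ⟨hgt.le, le_rfl⟩ hgt
    rw [interior_Icc] at hy
    rw [(hf y (hz.trans hy.1)).deriv]
    exact hpos y hy.1

lemma hasDerivAt_log_hurwitzSum_two {x : ℝ} (hx : 0 < x) :
    HasDerivAt (fun y => log (hurwitzSum 2 y)) (-2 * hurwitzSum 3 x / hurwitzSum 2 x) x := by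
  simpa using (hasDerivAt_hurwitzSum le_rfl hx).log (hurwitzSum_pos le_rfl hx).ne'

lemma strictMonoOn_neg_two_mul_hurwitzSum_three_div_two :
    StrictMonoOn (fun x => -2 * hurwitzSum 3 x / hurwitzSum 2 x) (Ioi 0) := by
  have hderiv : ∀ x ∈ Ioi (0 : ℝ), HasDerivAt (fun x => -2 * hurwitzSum 3 x / hurwitzSum 2 x)
      ((6 * hurwitzSum 4 x * hurwitzSum 2 x - 4 * hurwitzSum 3 x ^ 2) / hurwitzSum 2 x ^ 2) x := by
    intro x (hx : 0 < x)
    refine (((hasDerivAt_hurwitzSum (by norm_num : 2 ≤ 3) hx).const_mul (-2)).div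
      (hasDerivAt_hurwitzSum le_rfl hx) (hurwitzSum_pos le_rfl hx).ne').congr_deriv ?_
    push_cast
    ring
  refine strictMonoOn_of_deriv_pos (convex_Ioi 0)
    (fun x hx => (hderiv x hx).continuousAt.continuousWithinAt) fun x hx => ?_
  rw [interior_Ioi] at hx
  rw [(hderiv x hx).deriv]
  have hCS := sq_hurwitzSum_three_le hx
  have h2 := hurwitzSum_pos le_rfl hx
  have h4 := hurwitzSum_pos (by norm_num : 2 ≤ 4) hx
  exact div_pos (by nlinarith [mul_pos h4 h2]) (by positivity)

lemma strictAntiOn_trigamma_div_trigamma_add {γ : ℝ} (hγ : 0 < γ) :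
    StrictAntiOn (fun x => trigamma x / trigamma (x + γ)) (Ioi 0) := by
  intro x (hx : 0 < x) y (hy : 0 < y) hxy
  have hlog := strictAntiOn_sub_comp_add_of_strictMonoOn_deriv hγ
    (fun x (hx : 0 < x) => hasDerivAt_log_hurwitzSum_two hx)
    strictMonoOn_neg_two_mul_hurwitzSum_three_div_two hx hy hxy
  have hpos : ∀ x : ℝ, 0 < x → 0 < hurwitzSum 2 x := fun x hx => hurwitzSum_pos le_rfl hx
  simp only [trigamma_eq_hurwitzSum, hx, hy, add_pos, hγ]
  rw [← log_lt_log_iff (div_pos (hpos _ hy) (hpos _ (by linarith)))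
    (div_pos (hpos _ hx) (hpos _ (by linarith))),
    log_div (hpos _ hy).ne' (hpos _ (by linarith)).ne',
    log_div (hpos _ hx).ne' (hpos _ (by linarith)).ne']
  exact hlog

lemma trigamma_pos {x : ℝ} (hx : 0 < x) : 0 < trigamma x :=
  trigamma_eq_hurwitzSum hx ▸ hurwitzSum_pos le_rfl hx

lemma hasDerivAt_mul_digamma_add_sub_digamma (c : ℝ) {γ x : ℝ} (hx : 0 < x) (hxγ : 0 < x + γ) :
    HasDerivAt (fun x => c * digamma (x + γ) - digamma x)
      (c * trigamma (x + γ) - trigamma x) x := by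
  rw [trigamma_eq_hurwitzSum hx, trigamma_eq_hurwitzSum hxγ]
  exact (((hasDerivAt_digamma hxγ).comp_add_const x γ).const_mul c).sub (hasDerivAt_digamma hx)

lemma mul_trigamma_add_lt_trigamma {c γ x z : ℝ} (hγ : 0 < γ) (hx : 0 < x) (hxz : x < z)
    (hcrit : trigamma z = c * trigamma (z + γ)) : c * trigamma (x + γ) < trigamma x := by
  have h : trigamma z / trigamma (z + γ) < trigamma x / trigamma (x + γ) :=
    strictAntiOn_trigamma_div_trigamma_add hγ hx (hx.trans hxz) hxz
  rwa [hcrit, mul_div_cancel_right₀ _ (trigamma_pos (by linarith)).ne',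
    lt_div_iff₀ (trigamma_pos (by linarith))] at h

lemma trigamma_lt_mul_trigamma_add {c γ x z : ℝ} (hγ : 0 < γ) (hz : 0 < z) (hzx : z < x)
    (hcrit : trigamma z = c * trigamma (z + γ)) : trigamma x < c * trigamma (x + γ) := by
  have h : trigamma x / trigamma (x + γ) < trigamma z / trigamma (z + γ) :=
    strictAntiOn_trigamma_div_trigamma_add hγ hz (hz.trans hzx) hzx
  rwa [hcrit, mul_div_cancel_right₀ _ (trigamma_pos (by linarith)).ne',
    div_lt_iff₀ (trigamma_pos (by linarith))] at h

theorem inf_attained_at_critical_point_general (c : ℝ) :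
    ∃ γstar > (0 : ℝ), ∀ γ : ℝ, 0 < γ → γ < γstar →
      ∀ z : ℝ, 0 < z → trigamma z = c * trigamma (z + γ) →
        (∀ x : ℝ, 0 < x →
          c * digamma (z + γ) - digamma z ≤ c * digamma (x + γ) - digamma x) ∧
        (∀ x : ℝ, 0 < x →
          c * digamma (x + γ) - digamma x = c * digamma (z + γ) - digamma z → x = z) ∧
        sInf {y : ℝ | ∃ x : ℝ, 0 < x ∧ y = c * digamma (x + γ) - digamma x}
          = c * digamma (z + γ) - digamma z := by
  refine ⟨1, one_pos, fun γ hγ _ z hz hcrit => ?_⟩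
  have hmin : ∀ x, 0 < x → x ≠ z →
      c * digamma (z + γ) - digamma z < c * digamma (x + γ) - digamma x :=
    fun _ hx hxz => apply_lt_apply_of_deriv_neg_of_deriv_pos hz
      (fun y (hy : 0 < y) => hasDerivAt_mul_digamma_add_sub_digamma c hy (by linarith))
      (fun y hy => sub_neg.mpr (mul_trigamma_add_lt_trigamma hγ hy.1 hy.2 hcrit))
      (fun y (hy : z < y) => sub_pos.mpr (trigamma_lt_mul_trigamma_add hγ hz hy hcrit)) hx hxz
  have hle : ∀ x, 0 < x → c * digamma (z + γ) - digamma z ≤ c * digamma (x + γ) - digamma x :=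
    fun x hx => (eq_or_ne x z).elim (fun h => h ▸ le_rfl) fun h => (hmin x hx h).le
  refine ⟨hle, fun x hx heq => by_contra fun hxz => (hmin x hx hxz).ne' heq, ?_⟩
  exact IsLeast.csInf_eq ⟨⟨z, hz, rfl⟩, by rintro _ ⟨x, hx, rfl⟩; exact hle x hx⟩

/-- For `c > 1` and all sufficiently small `γ > 0`, the function
`z ↦ c·ψ(z + γ) - ψ(z)` on `(0, ∞)` attains its infimum, and it is attained precisely at the
point `z*_{c,γ}` (the positive solution of `ψ₁(z) = c·ψ₁(z + γ)`); in particular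
`inf_{z>0} [c·ψ(z + γ) - ψ(z)] = c·ψ(z* + γ) - ψ(z*)`. -/
theorem inf_attained_at_critical_point (c : ℝ) (hc : 1 < c) :
    ∃ γstar > (0 : ℝ), ∀ γ : ℝ, 0 < γ → γ < γstar →
      ∀ z : ℝ, 0 < z → trigamma z = c * trigamma (z + γ) →
        (∀ x : ℝ, 0 < x →
          c * digamma (z + γ) - digamma z ≤ c * digamma (x + γ) - digamma x) ∧
        (∀ x : ℝ, 0 < x →
          c * digamma (x + γ) - digamma x = c * digamma (z + γ) - digamma z → x = z) ∧
        sInf {y : ℝ | ∃ x : ℝ, 0 < x ∧ y = c * digamma (x + γ) - digamma x}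
          = c * digamma (z + γ) - digamma z :=
  inf_attained_at_critical_point_general c
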